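/- arXiv:2110.00709 — 9 statements merged into one kernel-verified Lean document; each statement's English description precedes it below -/
import Mathlib

section
/- Let G be a graph and suppose there exist vertices u, v with N[u] ⊆ N[v]. Then the domination polynomial satisfies D(G,x) = x·D(G/v,x) + D(G−v,x) + x·D(G−N[v],x), where G/v denotes vertex contraction of v and G−N[v] deletes the closed neighborhood of v. -/
open Polynomial

/-- A finite set of vertices dominates the graph. -/
def Dominates {V : Type*} (G : SimpleGraph V) (U : Finset V) : Prop :=
  ∀ v : V, v ∈ U ∨ ∃ u ∈ U, G.Adj u v

/-- The number of dominating sets of size `i`. -/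
noncomputable def domCount {V : Type*} [Fintype V] (G : SimpleGraph V) (i : ℕ) : ℕ :=
  Nat.card {U : Finset V // U.card = i ∧ Dominates G U}

/-- The domination polynomial. -/
noncomputable def domPoly {V : Type*} [Fintype V] (G : SimpleGraph V) : Polynomial ℤ :=
  ∑ i ∈ Finset.range (Fintype.card V + 1), Polynomial.C (domCount G i : ℤ) * Polynomial.X ^ i

/-- The graph `G/v`, obtained by contracting the vertex `v`: the vertex set is `V \ {v}`,
with all edges of `G - v` together with all edges between pairs of neighbors of `v`. -/
def contractVert {V : Type*} (G : SimpleGraph V) (v : V) : SimpleGraph {w : V // w ≠ v} :=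
  SimpleGraph.fromRel (fun a b => G.Adj a b ∨ (G.Adj v a ∧ G.Adj v b))

/-- The graph `G - v`. -/
def delVert {V : Type*} (G : SimpleGraph V) (v : V) : SimpleGraph {w : V // w ≠ v} :=
  G.comap (fun w => (w : V))

/-- The graph `G - N[v]`. -/
def delClosedNbhd {V : Type*} (G : SimpleGraph V) (v : V) :
    SimpleGraph {w : V // w ≠ v ∧ ¬ G.Adj v w} :=
  G.comap (fun w => (w : V))

/-!
Split the dominating sets `S` of `G` according to whether `v ∈ S`. Since `u ∈ N(v)` and
`N(u) ∖ {v} ⊆ N(v)`, whatever dominates `u` in `G - v` also dominates `v`, so the sets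
avoiding `v` are exactly the dominating sets of `G - v`. A dominating set `S ∋ v` that meets
`N(v)` corresponds to the dominating set `S ∖ {v}` of `G/v`, and one that misses `N(v)` to the
dominating set `S ∖ {v}` of `G - N[v]`; conversely every dominating set of `G/v` meets `N(v)`,
because it dominates `u`.
-/

open Finset

lemma sum_powerset_filter_eq_sum_subtype {α M : Type*} [Fintype α] [AddCommMonoid M]
    (p : α → Prop) [DecidablePred p] (f : Finset α → M) :
    ∑ U ∈ (univ.filter p).powerset, f U =
      ∑ W : Finset (Subtype p), f (W.map (.subtype p)) := by
  classical
  rw [← univ_map_subtype, map_eq_image, powerset_image, powerset_univ,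
    sum_image fun W _ W' _ h => map_injective (.subtype p) (by simpa only [map_eq_image] using h)]
  simp only [map_eq_image]

lemma sum_filter_powerset_insert {α M : Type*} [DecidableEq α] [AddCommMonoid M] {s : Finset α}
    {a : α} (ha : a ∉ s) (P : Finset α → Prop) [DecidablePred P] (f : Finset α → M) :
    ∑ U ∈ (insert a s).powerset with P U, f U =
      ∑ U ∈ s.powerset with P U, f U +
        ∑ U ∈ s.powerset with P (insert a U), f (insert a U) := by
  simp only [sum_filter]
  exact sum_powerset_insert ha _

open Classical in
lemma domPoly_eq_sum {W : Type*} [Fintype W] (H : SimpleGraph W) :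
    domPoly H = ∑ U with Dominates H U, X ^ #U := by
  rw [← sum_fiberwise_of_maps_to (g := card) (t := range (Fintype.card W + 1))
    (fun U _ => mem_range_succ_iff.2 (card_le_univ U))]
  refine sum_congr rfl fun i _ => ?_
  rw [sum_congr rfl fun U hU => by rw [(mem_filter.1 hU).2], sum_const, filter_filter, domCount,
    Nat.card_eq_fintype_card, Fintype.card_subtype, nsmul_eq_mul, ← C_eq_natCast]
  simp only [and_comm]

section Domination

variable {V : Type*} {G : SimpleGraph V} {u v : V}

lemma contractVert_adj (a b : {w : V // w ≠ v}) :
    (contractVert G v).Adj a b ↔ a ≠ b ∧ (G.Adj a b ∨ G.Adj v a ∧ G.Adj v b) := by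
  rw [contractVert, SimpleGraph.fromRel_adj, G.adj_comm b a, and_comm (a := G.Adj v b)]
  tauto

lemma dominates_delVert_iff (hvu : G.Adj v u) (hN : ∀ w, G.Adj u w → w = v ∨ G.Adj v w)
    (W : Finset {w // w ≠ v}) :
    Dominates (delVert G v) W ↔ Dominates G (W.map (.subtype _)) := by
  refine ⟨fun hW w => ?_, fun hU w => ?_⟩
  · by_cases hwv : w = v
    · subst hwv
      right
      rcases hW ⟨u, hvu.ne'⟩ with hu | ⟨x, hx, hxu⟩
      · exact ⟨u, mem_map_of_mem _ hu, hvu.symm⟩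
      · exact ⟨x, mem_map_of_mem _ hx, ((hN x hxu.symm).resolve_left x.2).symm⟩
    · rcases hW ⟨w, hwv⟩ with hw | ⟨x, hx, hxw⟩
      · exact .inl (mem_map_of_mem _ hw)
      · exact .inr ⟨x, mem_map_of_mem _ hx, hxw⟩
  · rcases hU w with hw | ⟨x, hx, hxw⟩
    · exact .inl ((mem_map' _).1 hw)
    · obtain ⟨a, ha, rfl⟩ := mem_map.1 hx
      exact .inr ⟨a, ha, hxw⟩

lemma dominates_contractVert_iff [DecidableEq V] (hvu : G.Adj v u)
    (hN : ∀ w, G.Adj u w → w = v ∨ G.Adj v w) (W : Finset {w // w ≠ v}) :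
    Dominates (contractVert G v) W ↔
      Dominates G (insert v (W.map (.subtype _))) ∧ ∃ x ∈ W, G.Adj v x := by
  refine ⟨fun hW => ⟨fun w => ?_, ?_⟩, fun ⟨hU, y, hy, hvy⟩ w => ?_⟩
  · by_cases hwv : w = v
    · exact .inl (mem_insert.2 (.inl hwv))
    rcases hW ⟨w, hwv⟩ with hw | ⟨x, hx, hxw⟩
    · exact .inl (mem_insert_of_mem (mem_map_of_mem _ hw))
    rcases ((contractVert_adj x _).1 hxw).2 with hxw | ⟨-, hvw⟩
    · exact .inr ⟨x, mem_insert_of_mem (mem_map_of_mem _ hx), hxw⟩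
    · exact .inr ⟨v, mem_insert_self _ _, hvw⟩
  · rcases hW ⟨u, hvu.ne'⟩ with hu | ⟨x, hx, hxu⟩
    · exact ⟨_, hu, hvu⟩
    rcases ((contractVert_adj x _).1 hxu).2 with hxu | ⟨hvx, -⟩
    · exact ⟨x, hx, (hN x hxu.symm).resolve_left x.2⟩
    · exact ⟨x, hx, hvx⟩
  · rcases hU w with hw | ⟨x, hx, hxw⟩
    · exact .inl ((mem_map' _).1 ((mem_insert.1 hw).resolve_left w.2))
    rcases mem_insert.1 hx with hxv | hx
    · by_cases hyw : y = w
      · exact .inl (hyw ▸ hy)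
      · exact .inr ⟨y, hy, (contractVert_adj y w).2 ⟨hyw, .inr ⟨hvy, hxv ▸ hxw⟩⟩⟩
    · obtain ⟨a, ha, rfl⟩ := mem_map.1 hx
      refine .inr ⟨a, ha, (contractVert_adj a w).2 ⟨?_, .inl hxw⟩⟩
      exact fun h => G.ne_of_adj hxw (congrArg _ h)

lemma dominates_delClosedNbhd_iff [DecidableEq V] (W : Finset {w // w ≠ v ∧ ¬ G.Adj v w}) :
    Dominates (delClosedNbhd G v) W ↔ Dominates G (insert v (W.map (.subtype _))) := by
  refine ⟨fun hW w => ?_, fun hU w => ?_⟩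
  · by_cases hwv : w = v
    · exact .inl (mem_insert.2 (.inl hwv))
    by_cases hvw : G.Adj v w
    · exact .inr ⟨v, mem_insert_self _ _, hvw⟩
    rcases hW ⟨w, hwv, hvw⟩ with hw | ⟨x, hx, hxw⟩
    · exact .inl (mem_insert_of_mem (mem_map_of_mem _ hw))
    · exact .inr ⟨x, mem_insert_of_mem (mem_map_of_mem _ hx), hxw⟩
  · rcases hU w with hw | ⟨x, hx, hxw⟩
    · exact .inl ((mem_map' _).1 ((mem_insert.1 hw).resolve_left w.2.1))
    rcases mem_insert.1 hx with hxv | hx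
    · exact (w.2.2 (hxv ▸ hxw)).elim
    · obtain ⟨a, ha, rfl⟩ := mem_map.1 hx
      exact .inr ⟨a, ha, hxw⟩

end Domination

section Sums

variable {V : Type*} [Fintype V] [DecidableEq V] {G : SimpleGraph V} {u v : V}

open Classical

lemma sum_powerset_erase_eq_domPoly_delVert (hvu : G.Adj v u)
    (hN : ∀ w, G.Adj u w → w = v ∨ G.Adj v w) :
    ∑ U ∈ (univ.erase v).powerset with Dominates G U, X ^ #U = domPoly (delVert G v) := by
  rw [sum_filter, ← filter_ne', sum_powerset_filter_eq_sum_subtype, domPoly_eq_sum, sum_filter]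
  refine sum_congr rfl fun W _ => ?_
  rw [dominates_delVert_iff hvu hN, card_map]

lemma sum_powerset_erase_insert_eq_domPoly_contractVert [DecidableRel G.Adj] (hvu : G.Adj v u)
    (hN : ∀ w, G.Adj u w → w = v ∨ G.Adj v w) :
    ∑ U ∈ (univ.erase v).powerset with Dominates G (insert v U) ∧ ∃ x ∈ U, G.Adj v x,
      X ^ #(insert v U) = X * domPoly (contractVert G v) := by
  rw [sum_filter, ← filter_ne', sum_powerset_filter_eq_sum_subtype, domPoly_eq_sum, sum_filter,
    mul_sum]
  refine sum_congr rfl fun W _ => ?_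
  have hmeets : (∃ x ∈ W.map (.subtype _), G.Adj v x) ↔ ∃ x ∈ W, G.Adj v x := by simp
  simp only [dominates_contractVert_iff hvu hN, hmeets,
    card_insert_of_notMem (notMem_map_subtype_of_not_property W (· rfl)), card_map, pow_succ',
    mul_ite, mul_zero]

lemma sum_powerset_erase_insert_eq_domPoly_delClosedNbhd [DecidableRel G.Adj] :
    ∑ U ∈ (univ.erase v).powerset with Dominates G (insert v U) ∧ ¬∃ x ∈ U, G.Adj v x,
      X ^ #(insert v U) = X * domPoly (delClosedNbhd G v) := by
  have : ((univ.erase v).powerset.filter fun U => ¬∃ x ∈ U, G.Adj v x) =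
      (univ.filter fun w => w ≠ v ∧ ¬G.Adj v w).powerset := by
    ext U
    simp only [mem_filter, mem_powerset, subset_iff, mem_erase, mem_univ, and_true, not_exists,
      not_and, true_and, imp_and, forall_and]
  rw [← filter_filter, filter_comm, this, sum_filter, sum_powerset_filter_eq_sum_subtype,
    domPoly_eq_sum, sum_filter, mul_sum]
  refine sum_congr rfl fun W _ => ?_
  rw [dominates_delClosedNbhd_iff,
    card_insert_of_notMem (notMem_map_subtype_of_not_property W (·.1 rfl)), card_map, pow_succ',
    mul_ite, mul_zero]

lemma sum_powerset_erase_insert_eq [DecidableRel G.Adj] (hvu : G.Adj v u)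
    (hN : ∀ w, G.Adj u w → w = v ∨ G.Adj v w) :
    ∑ U ∈ (univ.erase v).powerset with Dominates G (insert v U), X ^ #(insert v U) =
      X * domPoly (contractVert G v) + X * domPoly (delClosedNbhd G v) := by
  rw [← sum_filter_add_sum_filter_not _ (fun U => ∃ x ∈ U, G.Adj v x), filter_filter,
    filter_filter, sum_powerset_erase_insert_eq_domPoly_contractVert hvu hN,
    sum_powerset_erase_insert_eq_domPoly_delClosedNbhd]

end Sums

theorem domPoly_recursion {V : Type*} [Fintype V] [DecidableEq V] (G : SimpleGraph V)
    [DecidableRel G.Adj] (u v : V) (huv : u ≠ v)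
    (h : insert u (G.neighborSet u) ⊆ insert v (G.neighborSet v)) :
    domPoly G =
      X * domPoly (contractVert G v) + domPoly (delVert G v)
        + X * domPoly (delClosedNbhd G v) := by
  classical
  have hvu : G.Adj v u := (h (Set.mem_insert u _)).resolve_left huv
  have hN : ∀ w, G.Adj u w → w = v ∨ G.Adj v w := fun w huw => h (Set.mem_insert_of_mem _ huw)
  rw [add_right_comm, ← sum_powerset_erase_eq_domPoly_delVert hvu hN,
    ← sum_powerset_erase_insert_eq hvu hN]
  conv_lhs => rw [domPoly_eq_sum, ← powerset_univ, ← insert_erase (mem_univ v)]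
  rw [sum_filter_powerset_insert (notMem_erase v univ), add_comm]
end

section
/- Suppose (f_n)_{n≥1} is a sequence of polynomials with non-negative coefficients satisfying f_n = x(f_{n−1} + f_{n−2} + f_{n−3}) for all n ≥ 4. If for each i ∈ {1,2,3,4}, f_i is unimodal with a mode at μ_i and 0 ≤ μ_i − μ_{i−1} ≤ 1 for i ∈ {2,3,4}, then for all n ≥ 1, f_n is unimodal with a mode μ_n satisfying 0 ≤ μ_n − μ_{n−1} ≤ 1 for n ≥ 2. -/
/-!
Write `g_n = f_n + f_{n-1} + f_{n-2}`, so that `f_{n+1} = X g_n` and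
`g_n = X g_{n-1} + f_{n-1} + f_{n-2}` with `g_{n-1} = f_{n-1} + f_{n-2} + f_{n-3}`.
If `f_n = X g_{n-1}` has mode `α` and the modes of `f_{n-3}, f_{n-2}, f_{n-1}` increase up to `α`,
then the coefficients of `g_n` rise below `α - 1` and fall from `α`: the only delicate range is
`[mode f_{n-3}, α - 1)`, where `f_{n-1} + f_{n-2} = g_{n-1} - f_{n-3}` rises because `g_{n-1}`
rises and `f_{n-3}` falls. Hence `g_n` has a mode in `{α - 1, α}` and `f_{n+1}` one in
`{α, α + 1}`.
-/

open Polynomial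

def UnimodalWithModeR (p : Polynomial ℝ) (k : ℕ) : Prop :=
  (∀ i < k, p.coeff i ≤ p.coeff (i + 1)) ∧ (∀ i, k ≤ i → p.coeff (i + 1) ≤ p.coeff i)

def CoeffsRiseBelow (p : ℝ[X]) (k : ℕ) : Prop :=
  ∀ i < k, p.coeff i ≤ p.coeff (i + 1)

def CoeffsFallFrom (p : ℝ[X]) (k : ℕ) : Prop :=
  ∀ i, k ≤ i → p.coeff (i + 1) ≤ p.coeff i

variable {p q : ℝ[X]} {a k : ℕ}

namespace CoeffsRiseBelow

theorem mono (hp : CoeffsRiseBelow p k) (hak : a ≤ k) : CoeffsRiseBelow p a :=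
  fun i hi => hp i (by omega)

theorem add (hp : CoeffsRiseBelow p k) (hq : CoeffsRiseBelow q k) : CoeffsRiseBelow (p + q) k :=
  fun i hi => by simpa only [coeff_add] using add_le_add (hp i hi) (hq i hi)

theorem X_mul (hp : CoeffsRiseBelow p k) (h0 : 0 ≤ p.coeff 0) : CoeffsRiseBelow (X * p) (k + 1)
  | 0, _ => by rwa [coeff_X_mul_zero, zero_add, coeff_X_mul]
  | i + 1, hi => by rw [coeff_X_mul, coeff_X_mul]; exact hp i (by omega)

theorem of_X_mul (hp : CoeffsRiseBelow (X * p) k) : CoeffsRiseBelow p (k - 1) :=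
  fun i hi => by simpa only [coeff_X_mul] using hp (i + 1) (by omega)

theorem of_add_coeffsFallFrom {e : ℝ[X]} (hp : CoeffsRiseBelow p k)
    (hpe : CoeffsRiseBelow (p + e) a) (he : CoeffsFallFrom e k) : CoeffsRiseBelow p a := by
  intro i hi
  rcases lt_or_ge i k with hik | hki
  · exact hp i hik
  · have hsum := hpe i hi
    have hfall := he i hki
    simp only [coeff_add] at hsum
    linarith

end CoeffsRiseBelow

namespace CoeffsFallFrom

theorem mono (hp : CoeffsFallFrom p a) (hak : a ≤ k) : CoeffsFallFrom p k :=
  fun i hi => hp i (by omega)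

theorem add (hp : CoeffsFallFrom p k) (hq : CoeffsFallFrom q k) : CoeffsFallFrom (p + q) k :=
  fun i hi => by simpa only [coeff_add] using add_le_add (hp i hi) (hq i hi)

theorem X_mul (hp : CoeffsFallFrom p k) : CoeffsFallFrom (X * p) (k + 1) := by
  rintro (_ | i) hi
  · omega
  · rw [coeff_X_mul, coeff_X_mul]; exact hp i (by omega)

theorem of_X_mul (hp : CoeffsFallFrom (X * p) k) : CoeffsFallFrom p (k - 1) :=
  fun i hi => by simpa only [coeff_X_mul] using hp (i + 1) (by omega)

end CoeffsFallFrom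

namespace UnimodalWithModeR

theorem coeffsRiseBelow (hp : UnimodalWithModeR p k) : CoeffsRiseBelow p k := hp.1

theorem coeffsFallFrom (hp : UnimodalWithModeR p k) : CoeffsFallFrom p k := hp.2

theorem X_mul (hp : UnimodalWithModeR p k) (h0 : 0 ≤ p.coeff 0) :
    UnimodalWithModeR (X * p) (k + 1) :=
  ⟨CoeffsRiseBelow.X_mul hp.1 h0, CoeffsFallFrom.X_mul hp.2⟩

theorem of_X_mul (hp : UnimodalWithModeR (X * p) k) : UnimodalWithModeR p (k - 1) :=
  ⟨CoeffsRiseBelow.of_X_mul hp.1, CoeffsFallFrom.of_X_mul hp.2⟩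

end UnimodalWithModeR

noncomputable def nextMode (p : ℝ[X]) (a : ℕ) : ℕ :=
  if p.coeff a ≤ p.coeff (a + 1) then a + 1 else a

theorem nextMode_mem_Icc (p : ℝ[X]) (a : ℕ) : nextMode p a ∈ Set.Icc a (a + 1) := by
  unfold nextMode
  split_ifs <;> simp

theorem unimodalWithModeR_nextMode (hrise : CoeffsRiseBelow p a)
    (hfall : CoeffsFallFrom p (a + 1)) : UnimodalWithModeR p (nextMode p a) := by
  unfold nextMode
  split_ifs with h
  · refine ⟨fun i hi => ?_, hfall⟩
    rcases lt_or_ge i a with hia | hai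
    · exact hrise i hia
    · obtain rfl : i = a := by omega
      exact h
  · refine ⟨hrise, fun i hi => ?_⟩
    rcases lt_or_ge a i with hai | hia
    · exact hfall i hai
    · obtain rfl : i = a := by omega
      exact (lt_of_not_ge h).le

theorem unimodalWithModeR_nextMode_add_add {r e s : ℝ[X]} {δ γ β α : ℕ}
    (hs_eq : s = X * (r + q + e)) (he : CoeffsFallFrom e δ) (hq : UnimodalWithModeR q γ)
    (hr : UnimodalWithModeR r β) (hs : UnimodalWithModeR s α)
    (hδγ : δ ≤ γ) (hγβ : γ ≤ β) (hβα : β ≤ α) (h0 : 0 ≤ (r + q + e).coeff 0) :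
    UnimodalWithModeR (s + r + q) (nextMode (s + r + q) (α - 1)) := by
  subst hs_eq
  have hg := hs.of_X_mul
  apply unimodalWithModeR_nextMode
  · have hrq₀ : CoeffsRiseBelow (r + q) δ :=
      (hr.coeffsRiseBelow.mono (by omega)).add (hq.coeffsRiseBelow.mono hδγ)
    have hrq : CoeffsRiseBelow (r + q) (α - 1) :=
      hrq₀.of_add_coeffsFallFrom hg.coeffsRiseBelow he
    rw [add_assoc]
    exact ((hg.coeffsRiseBelow.X_mul h0).mono (by omega)).add hrq
  · exact (hg.coeffsFallFrom.X_mul.add (hr.coeffsFallFrom.mono (by omega))).add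
      (hq.coeffsFallFrom.mono (by omega))

-- `nextMode g_n (α - 1) + 1` stays within one of the mode `α` of `f_n` only if `α ≥ 1`; since
-- `f 4 = X * (f 3 + f 2 + f 1)` has no constant term, a mode `0` of `f 4` can be moved to `1`.
noncomputable def modeSeq (f : ℕ → ℝ[X]) (μ : ℕ → ℕ) : ℕ → ℕ
  | k + 5 => nextMode (f (k + 4) + f (k + 3) + f (k + 2)) (modeSeq f μ (k + 4) - 1) + 1
  | 4 => max (μ 4) 1
  | n => μ n

section modeSeq

variable {f : ℕ → ℝ[X]} {μ : ℕ → ℕ}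

theorem one_le_modeSeq (k : ℕ) : 1 ≤ modeSeq f μ (k + 4) := by
  cases k <;> simp [modeSeq]

theorem modeSeq_mem_Icc (hdiff : ∀ i, 2 ≤ i → i ≤ 4 → μ (i - 1) ≤ μ i ∧ μ i ≤ μ (i - 1) + 1) :
    ∀ n, 2 ≤ n →
      modeSeq f μ n ∈ Set.Icc (modeSeq f μ (n - 1)) (modeSeq f μ (n - 1) + 1)
  | 2, _ => hdiff 2 le_rfl (by norm_num)
  | 3, _ => hdiff 3 (by norm_num) (by norm_num)
  | 4, _ => by
    have := hdiff 4 (by norm_num) le_rfl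
    simp only [modeSeq, Set.mem_Icc] at this ⊢
    omega
  | k + 5, _ => by
    have hk := one_le_modeSeq (f := f) (μ := μ) k
    have hnext :=
      nextMode_mem_Icc (f (k + 4) + f (k + 3) + f (k + 2)) (modeSeq f μ (k + 4) - 1)
    show modeSeq f μ (k + 5) ∈ Set.Icc (modeSeq f μ (k + 4)) (modeSeq f μ (k + 4) + 1)
    simp only [modeSeq, Set.mem_Icc] at hnext ⊢
    omega

theorem coeff_zero_add_add_nonneg (hpos : ∀ n, 1 ≤ n → ∀ k, 0 ≤ (f n).coeff k) (i : ℕ)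
    (hi : 1 ≤ i) : 0 ≤ (f (i + 2) + f (i + 1) + f i).coeff 0 := by
  simp only [coeff_add]
  linarith [hpos (i + 2) (by omega) 0, hpos (i + 1) (by omega) 0, hpos i hi 0]

theorem unimodalWithModeR_modeSeq (hpos : ∀ n, 1 ≤ n → ∀ k, 0 ≤ (f n).coeff k)
    (hrec : ∀ n, 4 ≤ n → f n = X * (f (n - 1) + f (n - 2) + f (n - 3)))
    (hmode : ∀ i, 1 ≤ i → i ≤ 4 → UnimodalWithModeR (f i) (μ i))
    (hdiff : ∀ i, 2 ≤ i → i ≤ 4 → μ (i - 1) ≤ μ i ∧ μ i ≤ μ (i - 1) + 1) :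
    ∀ n, 1 ≤ n → UnimodalWithModeR (f n) (modeSeq f μ n)
  | 1, _ => hmode 1 le_rfl (by norm_num)
  | 2, _ => hmode 2 (by norm_num) (by norm_num)
  | 3, _ => hmode 3 (by norm_num) (by norm_num)
  | 4, _ => by
    have h4 : f 4 = X * (f 3 + f 2 + f 1) := hrec 4 le_rfl
    have hf4 := hmode 4 (by norm_num) le_rfl
    rw [h4] at hf4 ⊢
    rw [modeSeq, show max (μ 4) 1 = μ 4 - 1 + 1 by omega]
    exact hf4.of_X_mul.X_mul (coeff_zero_add_add_nonneg hpos 1 le_rfl)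
  | k + 5, _ => by
    have ih := fun i (hi : 1 ≤ i) (_ : i ≤ 4) =>
      unimodalWithModeR_modeSeq hpos hrec hmode hdiff (k + i) (by omega)
    have hmono := fun i (hi : 2 ≤ i) => (modeSeq_mem_Icc (f := f) hdiff (k + i) (by omega)).1
    have h5 : f (k + 5) = X * (f (k + 4) + f (k + 3) + f (k + 2)) := hrec (k + 5) (by omega)
    have h4 : f (k + 4) = X * (f (k + 3) + f (k + 2) + f (k + 1)) := hrec (k + 4) (by omega)
    have hg := unimodalWithModeR_nextMode_add_add h4
      (ih 1 le_rfl (by norm_num)).coeffsFallFrom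
      (ih 2 (by norm_num) (by norm_num)) (ih 3 (by norm_num) (by norm_num))
      (ih 4 (by norm_num) le_rfl) (hmono 2 le_rfl) (hmono 3 (by norm_num)) (hmono 4 (by norm_num))
      (coeff_zero_add_add_nonneg hpos (k + 1) (by omega))
    rw [h5, modeSeq]
    exact hg.X_mul (coeff_zero_add_add_nonneg hpos (k + 2) (by omega))

end modeSeq

theorem unimodal_poly_recursion (f : ℕ → Polynomial ℝ)
    (hpos : ∀ n, 1 ≤ n → ∀ k, 0 ≤ (f n).coeff k)
    (hrec : ∀ n, 4 ≤ n → f n = X * (f (n - 1) + f (n - 2) + f (n - 3)))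
    (μ : ℕ → ℕ)
    (hmode : ∀ i, 1 ≤ i → i ≤ 4 → UnimodalWithModeR (f i) (μ i))
    (hdiff : ∀ i, 2 ≤ i → i ≤ 4 → μ (i - 1) ≤ μ i ∧ μ i ≤ μ (i - 1) + 1) :
    ∃ ν : ℕ → ℕ, (∀ n, 1 ≤ n → UnimodalWithModeR (f n) (ν n)) ∧
      ∀ n, 2 ≤ n → ν (n - 1) ≤ ν n ∧ ν n ≤ ν (n - 1) + 1 :=
  ⟨modeSeq f μ, unimodalWithModeR_modeSeq hpos hrec hmode hdiff, modeSeq_mem_Icc hdiff⟩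
end

section
/- Let S be a spider graph with no legs of length 1, ℓ₂ legs of length 2, and ℓ₃ legs of length 3 (with ℓ₂+ℓ₃ ≥ 1). Then D(S,x) = x(2x+x²)^{ℓ₂}(2x+3x²+x³)^{ℓ₃} + (2x+x²)^{ℓ₂}(x+3x²+x³)^{ℓ₃} − x^{ℓ₂}(x+x²)^{ℓ₃}. -/
open Polynomial

/-- Vertices of the spider with `l1` legs of length 1, `l2` legs of length 2 and `l3` legs
of length 3: the center is `none`, and each leg vertex carries its leg and its position
along the leg (position `0` is the endpoint attached to the center). -/
abbrev SpiderV (l1 l2 l3 : ℕ) :=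
  Option ((Fin l1 × Fin 1) ⊕ (Fin l2 × Fin 2) ⊕ (Fin l3 × Fin 3))

/-- Consecutive vertices on a common leg. -/
def legRel {l1 l2 l3 : ℕ} :
    ((Fin l1 × Fin 1) ⊕ (Fin l2 × Fin 2) ⊕ (Fin l3 × Fin 3)) →
      ((Fin l1 × Fin 1) ⊕ (Fin l2 × Fin 2) ⊕ (Fin l3 × Fin 3)) → Prop
  | .inl (a, i), .inl (b, j) => a = b ∧ (i : ℕ) + 1 = (j : ℕ)
  | .inr (.inl (a, i)), .inr (.inl (b, j)) => a = b ∧ (i : ℕ) + 1 = (j : ℕ)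
  | .inr (.inr (a, i)), .inr (.inr (b, j)) => a = b ∧ (i : ℕ) + 1 = (j : ℕ)
  | _, _ => False

/-- The endpoint of a leg that is attached to the center. -/
def isLegEnd {l1 l2 l3 : ℕ} :
    ((Fin l1 × Fin 1) ⊕ (Fin l2 × Fin 2) ⊕ (Fin l3 × Fin 3)) → Prop
  | .inl (_, i) => (i : ℕ) = 0
  | .inr (.inl (_, i)) => (i : ℕ) = 0
  | .inr (.inr (_, i)) => (i : ℕ) = 0

/-- The asymmetric adjacency relation of the spider. -/
def spiderRel {l1 l2 l3 : ℕ} : SpiderV l1 l2 l3 → SpiderV l1 l2 l3 → Prop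
  | none, some x => isLegEnd x
  | some x, some y => legRel x y
  | _, _ => False

/-- The spider graph with `l1` legs of length 1, `l2` legs of length 2, `l3` legs of length 3. -/
def spider (l1 l2 l3 : ℕ) : SimpleGraph (SpiderV l1 l2 l3) :=
  SimpleGraph.fromRel spiderRel

/-!
Encode a vertex set of the spider by whether it contains the center together with, for every
leg, which of the leg's vertices it contains. Domination then splits into a condition at the
center and one condition per leg, which involves the center only through the first leg vertex,
so the generating function factors into powers of a polynomial per leg type. If the center is
chosen, this gives `x (2x + x²)^ℓ₂ (2x + 3x² + x³)^ℓ₃`. If it is not, the center must be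
dominated by a chosen first leg vertex; the configurations violating this are exactly those
with no first leg vertex chosen, and they contribute `x^ℓ₂ (x + x²)^ℓ₃`.
-/

open Finset

lemma domPoly_eq_sum_dominating {V : Type*} [Fintype V] (G : SimpleGraph V)
    [DecidablePred (Dominates G)] :
    domPoly G = ∑ U : Finset V, if Dominates G U then (X : ℤ[X]) ^ #U else 0 := by
  have hcount (i : ℕ) : domCount G i = #{U : Finset V | Dominates G U ∧ #U = i} := by
    rw [domCount, Nat.card_eq_fintype_card, Fintype.card_subtype]
    simp only [and_comm]
  rw [← sum_filter, ← sum_fiberwise_of_maps_to (t := range (Fintype.card V + 1)) (g := card)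
    fun U _ => mem_range.2 (Nat.lt_succ_of_le U.card_le_univ)]
  refine sum_congr rfl fun i _ => ?_
  rw [hcount, C_eq_natCast, ← filter_filter, ← nsmul_eq_mul, ← sum_const]
  exact sum_congr rfl fun U hU => by rw [(mem_filter.1 hU).2]

open Classical in
noncomputable def domWeight {V : Type*} [Fintype V] (G : SimpleGraph V) (χ : V → Bool) :
    ℤ[X] :=
  if Dominates G {v | χ v = true} then ∏ v, X ^ (χ v).toNat else 0

lemma domPoly_eq_sum_domWeight {V : Type*} [Fintype V] [DecidableEq V] (G : SimpleGraph V) :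
    domPoly G = ∑ χ : V → Bool, domWeight G χ := by
  classical
  rw [domPoly_eq_sum_dominating]
  refine (Fintype.sum_bijective (fun χ : V → Bool => ({v | χ v = true} : Finset V)) ?_ _ _
    fun χ => ?_).symm
  · refine ⟨fun χ ψ h => funext fun v => ?_,
      fun U => ⟨fun v => decide (v ∈ U), by ext; simp⟩⟩
    simpa using congrArg (v ∈ ·) h
  · simp only [domWeight, prod_pow_eq_pow_sum, card_filter]
    congr! with _ v
    cases χ v <;> rfl

section ProductSums

variable {S T R : Type*} [Fintype S] [Fintype T]

lemma sum_pi_prod_mul_prod [CommSemiring R] (φ : S → R) (ψ : T → R) (m n : ℕ) :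
    ∑ f : Fin m → S, ∑ g : Fin n → T, (∏ a, φ (f a)) * ∏ b, ψ (g b) =
      (∑ s, φ s) ^ m * (∑ t, ψ t) ^ n := by
  rw [Fintype.sum_pow, Fintype.sum_pow, Fintype.sum_mul_sum]

lemma sum_pi_ite_exists_or [CommRing R] (P : S → Prop) (Q : T → Prop) [DecidablePred P]
    [DecidablePred Q] (φ : S → R) (ψ : T → R) (m n : ℕ) :
    ∑ f : Fin m → S, ∑ g : Fin n → T,
        (if (∃ a, P (f a)) ∨ ∃ b, Q (g b) then (∏ a, φ (f a)) * ∏ b, ψ (g b) else 0) =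
      (∑ s, φ s) ^ m * (∑ t, ψ t) ^ n -
        (∑ s with ¬P s, φ s) ^ m * (∑ t with ¬Q t, ψ t) ^ n := by
  have hcompl (f : Fin m → S) (g : Fin n → T) :
      (if (∃ a, P (f a)) ∨ ∃ b, Q (g b) then (∏ a, φ (f a)) * ∏ b, ψ (g b) else 0) =
        (∏ a, φ (f a)) * (∏ b, ψ (g b)) -
          (∏ a, if ¬P (f a) then φ (f a) else 0) *
            ∏ b, if ¬Q (g b) then ψ (g b) else 0 := by
    rw [Fintype.prod_ite_zero, Fintype.prod_ite_zero, ite_zero_mul_ite_zero]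
    by_cases h : (∃ a, P (f a)) ∨ ∃ b, Q (g b)
    · rw [if_pos h, if_neg, sub_zero]
      rintro ⟨hP, hQ⟩
      rcases h with ⟨a, ha⟩ | ⟨b, hb⟩
      exacts [hP a ha, hQ b hb]
    · rw [if_neg h, if_pos (by simpa only [not_or, not_exists] using h), sub_self]
  simp_rw [hcompl, sum_sub_distrib, sum_pi_prod_mul_prod, sum_filter]
  exact congrArg _ (sum_pi_prod_mul_prod (fun s => if ¬P s then φ s else 0)
    (fun t => if ¬Q t then ψ t else 0) m n)

end ProductSums

/-- A vertex set of `spider 0 l2 l3`: whether it contains the center, and for each leg which of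
its vertices it contains, listed from the center outwards. -/
abbrev SpiderCode (l2 l3 : ℕ) :=
  Bool × (Fin l2 → Bool × Bool) × (Fin l3 → Bool × Bool × Bool)

namespace SpiderCode

variable {l2 l3 : ℕ}

def toIndicator (t : SpiderCode l2 l3) : SpiderV 0 l2 l3 → Bool
  | none => t.1
  | some (.inl (a, _)) => a.elim0
  | some (.inr (.inl (a, i))) => ![(t.2.1 a).1, (t.2.1 a).2] i
  | some (.inr (.inr (b, i))) => ![(t.2.2 b).1, (t.2.2 b).2.1, (t.2.2 b).2.2] i

variable (l2 l3) in
def equivIndicator : SpiderCode l2 l3 ≃ (SpiderV 0 l2 l3 → Bool) where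
  toFun := toIndicator
  invFun χ :=
    (χ none, fun a => (χ (some (.inr (.inl (a, 0)))), χ (some (.inr (.inl (a, 1))))),
      fun b => (χ (some (.inr (.inr (b, 0)))), χ (some (.inr (.inr (b, 1)))),
        χ (some (.inr (.inr (b, 2))))))
  left_inv _ := rfl
  right_inv χ := by
    funext v
    rcases v with _ | ⟨a, _⟩ | ⟨a, i⟩ | ⟨b, i⟩
    · rfl
    · exact a.elim0
    · fin_cases i <;> rfl
    · fin_cases i <;> rfl

lemma coe_equivIndicator : ⇑(equivIndicator l2 l3) = toIndicator := rfl

/- `c` says whether the center is chosen; the `i`-th conjunct says that the `i`-th vertex of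
the leg is chosen or has a chosen neighbour. -/

def leg2Dominated (c : Bool) : Bool × Bool → Bool
  | (x, y) => (x || c || y) && (y || x)

def leg3Dominated (c : Bool) : Bool × Bool × Bool → Bool
  | (x, y, z) => (x || c || y) && (y || x || z) && (z || y)

theorem dominates_toIndicator_iff (c : Bool) (f : Fin l2 → Bool × Bool)
    (g : Fin l3 → Bool × Bool × Bool) :
    Dominates (spider 0 l2 l3) {v | toIndicator (c, f, g) v = true} ↔
      (c = true ∨ (∃ a, (f a).1 = true) ∨ ∃ b, (g b).1 = true) ∧
        (∀ a, leg2Dominated c (f a) = true) ∧ ∀ b, leg3Dominated c (g b) = true := by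
  simp only [Dominates, mem_filter, mem_univ, true_and, Option.forall, Sum.forall, Prod.forall,
    Fin.forall_fin_succ, IsEmpty.forall_iff, and_true]
  simp [Option.exists, Sum.exists, Prod.exists, Fin.exists_fin_succ, exists_or, forall_and,
    or_assoc, and_assoc, spider, spiderRel, legRel, isLegEnd, toIndicator, leg2Dominated,
    leg3Dominated]

lemma prod_pow_toNat_toIndicator (c : Bool) (f : Fin l2 → Bool × Bool)
    (g : Fin l3 → Bool × Bool × Bool) :
    ∏ v, (X : ℤ[X]) ^ (toIndicator (c, f, g) v).toNat =
      X ^ c.toNat * ((∏ a, X ^ ((f a).1.toNat + (f a).2.toNat)) *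
        ∏ b, X ^ ((g b).1.toNat + (g b).2.1.toNat + (g b).2.2.toNat)) := by
  simp [Fintype.prod_option, Fintype.prod_sum_type, Fintype.prod_prod_type, Fin.prod_univ_succ,
    toIndicator, pow_add, prod_mul_distrib, mul_assoc]

noncomputable def leg2Weight (c : Bool) (p : Bool × Bool) : ℤ[X] :=
  if leg2Dominated c p then X ^ (p.1.toNat + p.2.toNat) else 0

noncomputable def leg3Weight (c : Bool) (p : Bool × Bool × Bool) : ℤ[X] :=
  if leg3Dominated c p then X ^ (p.1.toNat + p.2.1.toNat + p.2.2.toNat) else 0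

lemma domWeight_toIndicator_true (f : Fin l2 → Bool × Bool)
    (g : Fin l3 → Bool × Bool × Bool) :
    domWeight (spider 0 l2 l3) (toIndicator (true, f, g)) =
      X * ((∏ a, leg2Weight true (f a)) * ∏ b, leg3Weight true (g b)) := by
  simp only [domWeight, leg2Weight, leg3Weight]
  rw [Fintype.prod_ite_zero, Fintype.prod_ite_zero, ite_zero_mul_ite_zero, mul_ite, mul_zero]
  simp only [prod_pow_toNat_toIndicator, dominates_toIndicator_iff, true_or, true_and,
    Bool.toNat_true, pow_one]
  congr

lemma domWeight_toIndicator_false (f : Fin l2 → Bool × Bool)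
    (g : Fin l3 → Bool × Bool × Bool) :
    domWeight (spider 0 l2 l3) (toIndicator (false, f, g)) =
      if (∃ a, (f a).1 = true) ∨ ∃ b, (g b).1 = true then
        (∏ a, leg2Weight false (f a)) * ∏ b, leg3Weight false (g b) else 0 := by
  simp only [domWeight, leg2Weight, leg3Weight, Fintype.prod_ite_zero, ite_zero_mul_ite_zero,
    prod_pow_toNat_toIndicator, dominates_toIndicator_iff, Bool.false_eq_true, false_or,
    Bool.toNat_false, pow_zero, one_mul, ite_and]
  congr

lemma sum_leg2Weight (c : Bool) : ∑ p, leg2Weight c p = 2 * X + X ^ 2 := by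
  cases c <;> simp [Fintype.sum_prod_type, leg2Weight, leg2Dominated] <;> ring

lemma sum_leg3Weight_true : ∑ p, leg3Weight true p = 2 * X + 3 * X ^ 2 + X ^ 3 := by
  simp [Fintype.sum_prod_type, leg3Weight, leg3Dominated]
  ring

lemma sum_leg3Weight_false : ∑ p, leg3Weight false p = X + 3 * X ^ 2 + X ^ 3 := by
  simp [Fintype.sum_prod_type, leg3Weight, leg3Dominated]
  ring

lemma sum_leg2Weight_false_filter : ∑ p with ¬p.1 = true, leg2Weight false p = X := by
  simp [sum_filter, Fintype.sum_prod_type, leg2Weight, leg2Dominated]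

lemma sum_leg3Weight_false_filter :
    ∑ p with ¬p.1 = true, leg3Weight false p = X + X ^ 2 := by
  simp [sum_filter, Fintype.sum_prod_type, leg3Weight, leg3Dominated]
  ring

end SpiderCode

open SpiderCode in
theorem domPoly_spider_nolegs1_general (l2 l3 : ℕ) :
    domPoly (spider 0 l2 l3) =
      X * (2 * X + X ^ 2) ^ l2 * (2 * X + 3 * X ^ 2 + X ^ 3) ^ l3
        + (2 * X + X ^ 2) ^ l2 * (X + 3 * X ^ 2 + X ^ 3) ^ l3
        - X ^ l2 * (X + X ^ 2) ^ l3 := by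
  rw [domPoly_eq_sum_domWeight, ← (equivIndicator l2 l3).sum_comp, coe_equivIndicator,
    Fintype.sum_prod_type, Fintype.sum_bool]
  simp only [Fintype.sum_prod_type]
  simp only [domWeight_toIndicator_true, domWeight_toIndicator_false, ← mul_sum, ← sum_mul,
    ← Fintype.sum_pow, sum_pi_ite_exists_or (fun p : Bool × Bool => p.1 = true)
      (fun p : Bool × Bool × Bool => p.1 = true)]
  rw [sum_leg2Weight, sum_leg2Weight, sum_leg3Weight_true, sum_leg3Weight_false,
    sum_leg2Weight_false_filter, sum_leg3Weight_false_filter]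
  ring

theorem domPoly_spider_nolegs1 (l2 l3 : ℕ) (h : 1 ≤ l2 + l3) :
    domPoly (spider 0 l2 l3) =
      X * (2 * X + X ^ 2) ^ l2 * (2 * X + 3 * X ^ 2 + X ^ 3) ^ l3
        + (2 * X + X ^ 2) ^ l2 * (X + 3 * X ^ 2 + X ^ 3) ^ l3
        - X ^ l2 * (X + X ^ 2) ^ l3 :=
  domPoly_spider_nolegs1_general l2 l3
end

section
/- Let G be an m-regular graph on 2n vertices with m ≥ n−1. Then every subset of V(G) of size at least n+1 is dominating, and the number of non-dominating subsets of size n is at most 2n. -/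
namespace SimpleGraph

variable {V : Type*} [Fintype V] [DecidableEq V] (G : SimpleGraph V) [DecidableRel G.Adj]

def closedNeighborFinset (v : V) : Finset V := insert v (G.neighborFinset v)

theorem card_closedNeighborFinset (v : V) :
    (G.closedNeighborFinset v).card = G.degree v + 1 := by
  rw [closedNeighborFinset, Finset.card_insert_of_notMem (by simp), card_neighborFinset_eq_degree]

theorem exists_subset_compl_closedNeighborFinset_of_not_dominates {U : Finset V}
    (hU : ¬ Dominates G U) : ∃ v, U ⊆ (G.closedNeighborFinset v)ᶜ := by
  simp only [Dominates, not_forall, not_or, not_exists, not_and] at hU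
  obtain ⟨v, hvU, hadj⟩ := hU
  refine ⟨v, fun u hu => ?_⟩
  simp only [closedNeighborFinset, Finset.mem_compl, Finset.mem_insert, mem_neighborFinset]
  rintro (rfl | hvu)
  · exact hvU hu
  · exact hadj u hu hvu.symm

theorem card_compl_closedNeighborFinset_add_degree (v : V) :
    (G.closedNeighborFinset v)ᶜ.card + G.degree v + 1 = Fintype.card V := by
  rw [add_assoc, ← card_closedNeighborFinset, Finset.card_compl_add_card]

variable {G}

theorem dominates_of_card_lt {d : ℕ} (hdeg : ∀ v, d ≤ G.degree v) {U : Finset V}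
    (hU : Fintype.card V < U.card + d + 1) : Dominates G U := by
  by_contra hdom
  obtain ⟨v, hv⟩ := G.exists_subset_compl_closedNeighborFinset_of_not_dominates hdom
  have := Finset.card_le_card hv
  have := G.card_compl_closedNeighborFinset_add_degree v
  have := hdeg v
  omega

theorem exists_eq_compl_closedNeighborFinset_of_not_dominates {d : ℕ}
    (hdeg : ∀ v, d ≤ G.degree v) {U : Finset V} (hU : Fintype.card V ≤ U.card + d + 1)
    (hdom : ¬ Dominates G U) : ∃ v, U = (G.closedNeighborFinset v)ᶜ := by
  obtain ⟨v, hv⟩ := G.exists_subset_compl_closedNeighborFinset_of_not_dominates hdom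
  refine ⟨v, Finset.eq_of_subset_of_card_le hv ?_⟩
  have := G.card_compl_closedNeighborFinset_add_degree v
  have := hdeg v
  omega

theorem card_not_dominates_le {d k : ℕ} (hdeg : ∀ v, d ≤ G.degree v)
    (hk : Fintype.card V ≤ k + d + 1) :
    Nat.card {U : Finset V // U.card = k ∧ ¬ Dominates G U} ≤ Fintype.card V := by
  have hcompl (U : {U : Finset V // U.card = k ∧ ¬ Dominates G U}) :
      ∃ v, (U : Finset V) = (G.closedNeighborFinset v)ᶜ :=
    exists_eq_compl_closedNeighborFinset_of_not_dominates hdeg (by rw [U.2.1]; exact hk) U.2.2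
  choose center hcenter using hcompl
  have hinj : Function.Injective center := fun U₁ U₂ h =>
    Subtype.ext <| by rw [hcenter U₁, hcenter U₂, h]
  simpa using Nat.card_le_card_of_injective center hinj

end SimpleGraph

theorem regular_large_sets_dominate {V : Type*} [Fintype V] (G : SimpleGraph V)
    [DecidableRel G.Adj] (m n : ℕ) (hcard : Fintype.card V = 2 * n)
    (hreg : ∀ v, G.degree v = m) (hnm : n - 1 ≤ m) :
    (∀ U : Finset V, n + 1 ≤ U.card → Dominates G U) ∧
      Nat.card {U : Finset V // U.card = n ∧ ¬ Dominates G U} ≤ 2 * n := by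
  classical
  have hdeg : ∀ v, m ≤ G.degree v := fun v => (hreg v).ge
  refine ⟨fun U hU => SimpleGraph.dominates_of_card_lt hdeg (by omega), ?_⟩
  exact hcard ▸ SimpleGraph.card_not_dominates_le hdeg (by omega)
end

section
/- Suppose 2 ≤ n₁ ≤ n₂ ≤ ⋯ ≤ n_t are integers with t ≥ 2, n₂ ≥ 3, and if t = 2 then n₁ ≥ 3. Then (n₁−1)(n₂−1)⋯(n_t−1) ≥ 2·log₂(n₁n₂⋯n_t) unless the tuple (n₁,…,n_t) is one of: (3,3), (3,4), (2,3,3), (2,3,4), (2,3,5), (2,3,6), (2,4,4), (3,3,3), (2,3,3,3), (2,3,3,4). -/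
/-!
Write the inequality as `(∏ nᵢ)² ≤ 2 ^ ∏ (nᵢ - 1)`. Raising one entry `x ≥ 1` to `x + 1`
multiplies the left side by at most `4`, while the exponent grows by `∏_{j ≠ i} (nⱼ - 1)`, which is
at least `2` once all entries are at least `2` and another entry is at least `3`. So the inequality
propagates upwards coordinatewise, and it suffices to check it at the minimal non-exceptional
tuples: `(3,5)`, `(4,4)`; `(3,3,4)`, `(2,3,7)`, `(2,4,5)`; `(3,3,3,3)`, `(2,3,3,5)`, `(2,3,4,4)`;
and `(2,3,…,3)` with `k ≥ 4` threes, where it reads `4 * 9 ^ k ≤ 2 ^ 2 ^ k`.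
-/

open Finset Function

section

variable {ι : Type*} [Fintype ι]

def SqProdLeTwoPow (n : ι → ℕ) : Prop :=
  (∏ i, n i) ^ 2 ≤ 2 ^ ∏ i, (n i - 1)

instance : DecidablePred (SqProdLeTwoPow (ι := ι)) :=
  fun _ => inferInstanceAs (Decidable (_ ≤ _))

theorem SqProdLeTwoPow.two_mul_logb_prod_le {n : ι → ℕ} (h : SqProdLeTwoPow n)
    (hn : ∀ i, 1 ≤ n i) :
    2 * Real.logb 2 (∏ i, (n i : ℝ)) ≤ ∏ i, ((n i : ℝ) - 1) := by
  have hsub : ∏ i, ((n i : ℝ) - 1) = ((∏ i, (n i - 1) : ℕ) : ℝ) := by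
    push_cast [Nat.cast_sub (hn _)]; rfl
  have hpos : (0 : ℝ) < ∏ i, (n i : ℝ) := prod_pos fun i _ => by exact_mod_cast hn i
  rw [hsub]
  calc 2 * Real.logb 2 (∏ i, (n i : ℝ)) = Real.logb 2 ((∏ i, (n i : ℝ)) ^ 2) := by
        simp [Real.logb_pow]
    _ ≤ _ := by
      rw [Real.logb_le_iff_le_rpow one_lt_two (pow_pos hpos 2), Real.rpow_natCast]
      exact_mod_cast h

theorem sq_succ_mul_le_two_pow {x P R : ℕ} (hx : 1 ≤ x) (hR : 2 ≤ R)
    (h : (x * P) ^ 2 ≤ 2 ^ ((x - 1) * R)) : ((x + 1) * P) ^ 2 ≤ 2 ^ (x * R) := by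
  obtain ⟨y, rfl⟩ := Nat.exists_eq_add_of_le' hx
  calc ((y + 1 + 1) * P) ^ 2 ≤ (2 * (y + 1) * P) ^ 2 := by gcongr; omega
    _ = 2 ^ 2 * ((y + 1) * P) ^ 2 := by ring
    _ ≤ 2 ^ 2 * 2 ^ (y * R) := Nat.mul_le_mul_left _ (by simpa using h)
    _ = 2 ^ (y * R + 2) := by ring
    _ ≤ 2 ^ ((y + 1) * R) := Nat.pow_le_pow_right two_pos (by nlinarith)

variable [DecidableEq ι]

theorem SqProdLeTwoPow.update_succ {n : ι → ℕ} (h : SqProdLeTwoPow n) {i : ι} (hi : 1 ≤ n i)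
    (hR : 2 ≤ ∏ j ∈ univ \ {i}, (n j - 1)) : SqProdLeTwoPow (update n i (n i + 1)) := by
  have hsub : (fun j => update n i (n i + 1) j - 1) = update (fun j => n j - 1) i (n i) := by
    ext j; by_cases hj : j = i <;> simp [hj]
  unfold SqProdLeTwoPow at *
  rw [prod_update_of_mem (mem_univ i), hsub, prod_update_of_mem (mem_univ i)]
  rw [prod_eq_mul_prod_sdiff_singleton_of_mem (mem_univ i),
    prod_eq_mul_prod_sdiff_singleton_of_mem (mem_univ i) (fun j => n j - 1)] at h
  exact sq_succ_mul_le_two_pow hi hR h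

theorem two_le_prod_sdiff_sub_one {m : ι → ℕ} (hm2 : ∀ i, 2 ≤ m i)
    (hm3 : ∃ j₁ j₂, j₁ ≠ j₂ ∧ 3 ≤ m j₁ ∧ 3 ≤ m j₂) (i : ι) :
    2 ≤ ∏ j ∈ univ \ {i}, (m j - 1) := by
  obtain ⟨j₁, j₂, hne, hj₁, hj₂⟩ := hm3
  obtain ⟨j, hji, hj⟩ : ∃ j ≠ i, 3 ≤ m j := by
    by_cases h : j₁ = i
    · exact ⟨j₂, fun h' => hne (h.trans h'.symm), hj₂⟩
    · exact ⟨j₁, h, hj₁⟩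
  calc 2 ≤ m j - 1 := by omega
    _ ≤ ∏ j ∈ univ \ {i}, (m j - 1) :=
      single_le_prod' (f := fun j => m j - 1) (fun k _ => by have := hm2 k; omega)
        (by simpa using hji)

theorem SqProdLeTwoPow.mono {m n : ι → ℕ} (hm : SqProdLeTwoPow m) (hm2 : ∀ i, 2 ≤ m i)
    (hm3 : ∃ j₁ j₂, j₁ ≠ j₂ ∧ 3 ≤ m j₁ ∧ 3 ≤ m j₂) (hmn : m ≤ n) : SqProdLeTwoPow n := by
  induction hd : ∑ i, (n i - m i) using Nat.strong_induction_on generalizing m with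
  | _ d ih =>
  by_cases heq : m = n
  · exact heq ▸ hm
  obtain ⟨i, hi⟩ : ∃ i, m i < n i := by
    by_contra! hnm
    exact heq (le_antisymm hmn hnm)
  have hmm' : m ≤ update m i (m i + 1) := by
    intro j; by_cases hj : j = i <;> simp [hj]
  refine ih _ ?_ (hm.update_succ (by have := hm2 i; omega) (two_le_prod_sdiff_sub_one hm2 hm3 i))
    (fun j => (hm2 j).trans (hmm' j)) ?_ (fun j => ?_) rfl
  · rw [← hd]
    refine sum_lt_sum (fun j _ => Nat.sub_le_sub_left (hmm' j) _) ⟨i, mem_univ i, ?_⟩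
    simp only [update_self]
    omega
  · obtain ⟨j₁, j₂, hj, hj₁, hj₂⟩ := hm3
    exact ⟨j₁, j₂, hj, hj₁.trans (hmm' j₁), hj₂.trans (hmm' j₂)⟩
  · by_cases hj : j = i
    · subst hj; simpa using hi
    · simpa [hj] using hmn j

end

theorem four_mul_nine_pow_le_two_pow_two_pow {k : ℕ} (hk : 4 ≤ k) : 4 * 9 ^ k ≤ 2 ^ 2 ^ k := by
  induction k, hk using Nat.le_induction with
  | base => norm_num
  | succ k hk ih =>
    have h9 : 9 ≤ 2 ^ 2 ^ k :=
      calc 9 ≤ 2 ^ 2 ^ 2 := by norm_num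
        _ ≤ 2 ^ 2 ^ k := by gcongr <;> omega
    calc 4 * 9 ^ (k + 1) = 9 * (4 * 9 ^ k) := by ring
      _ ≤ 2 ^ 2 ^ k * 2 ^ 2 ^ k := Nat.mul_le_mul h9 ih
      _ = 2 ^ 2 ^ (k + 1) := by rw [← pow_add, pow_succ, mul_two]

theorem sqProdLeTwoPow_cons_two_three {k : ℕ} (hk : 4 ≤ k) :
    SqProdLeTwoPow (Fin.cons 2 fun _ : Fin k => 3 : Fin (k + 1) → ℕ) := by
  have h := four_mul_nine_pow_le_two_pow_two_pow hk
  simp only [SqProdLeTwoPow, Fin.prod_univ_succ, Fin.cons_zero, Fin.cons_succ, prod_const,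
    card_univ, Fintype.card_fin]
  convert h using 1
  · rw [show 9 ^ k = (3 ^ k) ^ 2 by rw [← pow_mul, mul_comm, pow_mul]; norm_num]
    ring
  · norm_num

def exceptionalTuples : List (List ℕ) :=
  [[3, 3], [3, 4], [2, 3, 3], [2, 3, 4], [2, 3, 5], [2, 3, 6], [2, 4, 4], [3, 3, 3],
    [2, 3, 3, 3], [2, 3, 3, 4]]

theorem sqProdLeTwoPow_fin_two {n : Fin 2 → ℕ} (hmono : Monotone n) (h0 : 3 ≤ n 0)
    (hexc : List.ofFn n ∉ exceptionalTuples) : SqProdLeTwoPow n := by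
  have h01 := hmono (show (0 : Fin 2) ≤ 1 by decide)
  have hcases : n 0 = 3 ∧ 5 ≤ n 1 ∨ 4 ≤ n 0 := by
    simp [exceptionalTuples, List.ofFn_succ] at hexc; omega
  rcases hcases with h | h
  · exact .mono (m := ![3, 5]) (by decide) (by decide) (by decide)
      (by simp [Pi.le_def, Fin.forall_fin_succ]; omega)
  · exact .mono (m := ![4, 4]) (by decide) (by decide) (by decide)
      (by simp [Pi.le_def, Fin.forall_fin_succ]; omega)

theorem sqProdLeTwoPow_fin_three {n : Fin 3 → ℕ} (hmono : Monotone n) (h0 : 2 ≤ n 0)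
    (h1 : 3 ≤ n 1) (hexc : List.ofFn n ∉ exceptionalTuples) : SqProdLeTwoPow n := by
  have h01 := hmono (show (0 : Fin 3) ≤ 1 by decide)
  have h12 := hmono (show (1 : Fin 3) ≤ 2 by decide)
  have hcases : 3 ≤ n 0 ∧ 4 ≤ n 2 ∨ n 0 = 2 ∧ n 1 = 3 ∧ 7 ≤ n 2 ∨ n 0 = 2 ∧ 4 ≤ n 1 ∧ 5 ≤ n 2 := by
    simp [exceptionalTuples, List.ofFn_succ] at hexc; omega
  rcases hcases with h | h | h
  · exact .mono (m := ![3, 3, 4]) (by decide) (by decide) (by decide)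
      (by simp [Pi.le_def, Fin.forall_fin_succ]; omega)
  · exact .mono (m := ![2, 3, 7]) (by decide) (by decide) (by decide)
      (by simp [Pi.le_def, Fin.forall_fin_succ]; omega)
  · exact .mono (m := ![2, 4, 5]) (by decide) (by decide) (by decide)
      (by simp [Pi.le_def, Fin.forall_fin_succ]; omega)

theorem sqProdLeTwoPow_fin_four {n : Fin 4 → ℕ} (hmono : Monotone n) (h0 : 2 ≤ n 0)
    (h1 : 3 ≤ n 1) (hexc : List.ofFn n ∉ exceptionalTuples) : SqProdLeTwoPow n := by
  have h01 := hmono (show (0 : Fin 4) ≤ 1 by decide)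
  have h12 := hmono (show (1 : Fin 4) ≤ 2 by decide)
  have h23 := hmono (show (2 : Fin 4) ≤ 3 by decide)
  have hcases : 3 ≤ n 0 ∨ n 0 = 2 ∧ n 2 = 3 ∧ 5 ≤ n 3 ∨ n 0 = 2 ∧ 4 ≤ n 2 := by
    simp [exceptionalTuples, List.ofFn_succ] at hexc; omega
  rcases hcases with h | h | h
  · exact .mono (m := ![3, 3, 3, 3]) (by decide) (by decide) (by decide)
      (by simp [Pi.le_def, Fin.forall_fin_succ]; omega)
  · exact .mono (m := ![2, 3, 3, 5]) (by decide) (by decide) (by decide)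
      (by simp [Pi.le_def, Fin.forall_fin_succ]; omega)
  · exact .mono (m := ![2, 3, 4, 4]) (by decide) (by decide) (by decide)
      (by simp [Pi.le_def, Fin.forall_fin_succ]; omega)

theorem sqProdLeTwoPow_fin_succ_of_four_le {k : ℕ} (hk : 4 ≤ k) {n : Fin (k + 1) → ℕ}
    (h0 : 2 ≤ n 0) (hsucc : ∀ i : Fin k, 3 ≤ n i.succ) : SqProdLeTwoPow n :=
  (sqProdLeTwoPow_cons_two_three hk).mono (Fin.cases (by simp) (by simp))
    ⟨Fin.succ ⟨0, by omega⟩, Fin.succ ⟨1, by omega⟩, by simp, by rw [Fin.cons_succ],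
      by rw [Fin.cons_succ]⟩
    (Fin.cases h0 hsucc)

theorem log_ineq_exceptions (t : ℕ) (ht : 2 ≤ t) (n : Fin t → ℕ)
    (hmono : Monotone n)
    (hn0 : 2 ≤ n ⟨0, by omega⟩)
    (hn1 : 3 ≤ n ⟨1, by omega⟩)
    (ht2 : t = 2 → 3 ≤ n ⟨0, by omega⟩)
    (hexc : List.ofFn n ∉
      ([[3, 3], [3, 4],
        [2, 3, 3], [2, 3, 4], [2, 3, 5], [2, 3, 6], [2, 4, 4], [3, 3, 3],
        [2, 3, 3, 3], [2, 3, 3, 4]] : List (List ℕ))) :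
    2 * Real.logb 2 (∏ i, (n i : ℝ)) ≤ ∏ i, ((n i : ℝ) - 1) := by
  refine SqProdLeTwoPow.two_mul_logb_prod_le ?_ fun i => ?_
  · obtain rfl | rfl | rfl | ht5 : t = 2 ∨ t = 3 ∨ t = 4 ∨ 5 ≤ t := by omega
    · exact sqProdLeTwoPow_fin_two hmono (ht2 rfl) hexc
    · exact sqProdLeTwoPow_fin_three hmono hn0 hn1 hexc
    · exact sqProdLeTwoPow_fin_four hmono hn0 hn1 hexc
    · obtain ⟨k, rfl⟩ : ∃ k, t = k + 1 := ⟨t - 1, by omega⟩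
      exact sqProdLeTwoPow_fin_succ_of_four_le (by omega) hn0 fun i =>
        hn1.trans (hmono (Fin.le_def.2 (by simp)))
  · exact one_le_two.trans (hn0.trans (hmono (Fin.le_def.2 (Nat.zero_le _))))
end

section
/- Let G be a graph on n vertices with upper domination number Γ(G). For every i ≥ (n + Γ(G) − 1)/2, we have d_i(G) ≥ d_{i+1}(G). -/
/-- A minimal dominating set: dominating, with no proper subset dominating. -/
def MinimalDominating {V : Type*} (G : SimpleGraph V) (U : Finset V) : Prop :=
  Dominates G U ∧ ∀ W ⊂ U, ¬ Dominates G W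

/-- The upper domination number: the maximum size of a minimal dominating set. -/
noncomputable def upperDom {V : Type*} [Fintype V] (G : SimpleGraph V) : ℕ :=
  sSup {k : ℕ | ∃ U : Finset V, U.card = k ∧ MinimalDominating G U}

open Finset

section

variable {V : Type*} {G : SimpleGraph V}

theorem Dominates.mono {A B : Finset V} (hB : Dominates G B) (h : B ⊆ A) : Dominates G A :=
  fun v => (hB v).imp (fun hv => h hv) fun ⟨u, hu, huv⟩ => ⟨u, h hu, huv⟩

theorem Dominates.exists_minimalDominating_subset {A : Finset V} (hA : Dominates G A) :
    ∃ M ⊆ A, MinimalDominating G M := by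
  induction A using Finset.strongInduction with
  | H A ih =>
    by_cases h : ∀ W ⊂ A, ¬ Dominates G W
    · exact ⟨A, subset_rfl, hA, h⟩
    · push Not at h
      obtain ⟨W, hWA, hW⟩ := h
      obtain ⟨M, hMW, hM⟩ := ih W hWA hW
      exact ⟨M, hMW.trans hWA.subset, hM⟩

theorem card_filter_superset_le_card_sub_card [Fintype V] [DecidableEq V] (𝒜 : Finset (Finset V))
    (B : Finset V) (h𝒜 : ∀ A ∈ 𝒜, #A = #B + 1) :
    #{A ∈ 𝒜 | B ⊆ A} ≤ Fintype.card V - #B :=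
  calc #{A ∈ 𝒜 | B ⊆ A} ≤ #(Bᶜ.image (insert · B)) := card_le_card fun A hA => by
        rw [mem_filter] at hA
        obtain ⟨x, hx, rfl⟩ := exists_eq_insert_iff.2 ⟨hA.2, (h𝒜 A hA.1).symm⟩
        exact mem_image_of_mem _ (mem_compl.2 hx)
    _ ≤ #Bᶜ := card_image_le
    _ = Fintype.card V - #B := card_compl B

section Fintype

variable [Fintype V]

theorem MinimalDominating.card_le_upperDom {U : Finset V} (h : MinimalDominating G U) :
    #U ≤ upperDom G :=
  le_csSup ⟨Fintype.card V, fun _ ⟨W, hW, _⟩ => hW ▸ W.card_le_univ⟩ ⟨U, rfl, h⟩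

variable (G) in
theorem upperDom_le_card : upperDom G ≤ Fintype.card V := by
  have huniv : Dominates G univ := fun v => Or.inl (mem_univ v)
  obtain ⟨M, -, hM⟩ := huniv.exists_minimalDominating_subset
  exact csSup_le ⟨#M, M, rfl, hM⟩ fun _ ⟨W, hW, _⟩ => hW ▸ W.card_le_univ

open Classical in
variable (G) in
noncomputable def dominatingSets (i : ℕ) : Finset (Finset V) :=
  {U | #U = i ∧ Dominates G U}

theorem mem_dominatingSets {i : ℕ} {U : Finset V} :
    U ∈ dominatingSets G i ↔ #U = i ∧ Dominates G U := by
  simp [dominatingSets]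

theorem domCount_eq_card_dominatingSets (i : ℕ) : domCount G i = #(dominatingSets G i) := by
  classical
  rw [domCount, Nat.card_eq_fintype_card, Fintype.card_subtype, dominatingSets]

theorem sub_upperDom_le_card_dominating_subsets [DecidableEq V] {i : ℕ} {A : Finset V}
    (hA : A ∈ dominatingSets G (i + 1)) :
    i + 1 - upperDom G ≤ #{B ∈ dominatingSets G i | B ⊆ A} := by
  obtain ⟨hAcard, hAdom⟩ := mem_dominatingSets.1 hA
  obtain ⟨M, hMA, hM⟩ := hAdom.exists_minimalDominating_subset
  have hmaps : ∀ x ∈ A \ M, A.erase x ∈ {B ∈ dominatingSets G i | B ⊆ A} := by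
    intro x hx
    obtain ⟨hxA, hxM⟩ := mem_sdiff.1 hx
    refine mem_filter.2 ⟨mem_dominatingSets.2 ⟨?_, ?_⟩, erase_subset x A⟩
    · rw [card_erase_of_mem hxA, hAcard, Nat.add_sub_cancel]
    · exact hM.1.mono (subset_erase.2 ⟨hMA, hxM⟩)
  calc i + 1 - upperDom G ≤ #A - #M := by have := hM.card_le_upperDom; omega
    _ = #(A \ M) := (card_sdiff_of_subset hMA).symm
    _ ≤ _ := card_le_card_of_injOn _ hmaps ((erase_injOn A).mono sdiff_subset)

theorem domCount_succ_mul_le (i : ℕ) :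
    domCount G (i + 1) * (i + 1 - upperDom G) ≤ domCount G i * (Fintype.card V - i) := by
  classical
  rw [domCount_eq_card_dominatingSets, domCount_eq_card_dominatingSets]
  refine card_mul_le_card_mul (fun A B : Finset V => B ⊆ A)
    (fun A hA => sub_upperDom_le_card_dominating_subsets hA) fun B hB => ?_
  have hB : #B = i := (mem_dominatingSets.1 hB).1
  exact hB ▸ card_filter_superset_le_card_sub_card _ B fun A hA => by
    rw [(mem_dominatingSets.1 hA).1, hB]

end Fintype

end

theorem domCount_decreasing_of_upperDom {V : Type*} [Fintype V] (G : SimpleGraph V) (i : ℕ)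
    (hi : ((Fintype.card V : ℝ) + (upperDom G : ℝ) - 1) / 2 ≤ (i : ℝ)) :
    domCount G (i + 1) ≤ domCount G i := by
  have hsum : Fintype.card V + upperDom G ≤ 2 * i + 1 := by
    exact_mod_cast (by linarith : (Fintype.card V : ℝ) + upperDom G ≤ 2 * i + 1)
  have hΓ := upperDom_le_card G
  have hpos : 0 < i + 1 - upperDom G := by omega
  refine Nat.le_of_mul_le_mul_right ((domCount_succ_mul_le i).trans (Nat.mul_le_mul_left _ ?_)) hpos
  omega
end

section
/- Let G be a graph on n vertices, m of which are universal vertices, and let w_m be the smallest positive real root of f_m(x) = x^{m+1} − x^m − 2x + 1. Then d_i(G) ≥ d_{i+1}(G) for all i ≥ (1 − w_m)·n. -/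
/-- The number of universal vertices of `G`, i.e. vertices adjacent to every other vertex. -/
noncomputable def universalCount {V : Type*} [Fintype V] (G : SimpleGraph V) : ℕ :=
  Nat.card {v : V // ∀ u : V, u ≠ v → G.Adj v u}

/-!
Trivially `d_{i+1} ≤ C(n,i+1)`, while every `i`-set meeting one of the `m` universal vertices
dominates, so `d_i ≥ C(n,i) - C(n-m,i)`. It therefore suffices that
`C(n,i+1) + C(n-m,i) ≤ C(n,i)`. With `t = (n-i)/n` we have
`C(n,i+1)/C(n,i) ≤ (n-i)/i = t/(1-t)` and `C(n-m,i)/C(n,i) ≤ t^m`, and `t/(1-t) + t^m ≤ 1` is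
`f_m(t) ≥ 0`. Since `f_m(0) = 1 > 0` and `w_m` is the first positive root of `f_m`, this holds
for `0 ≤ t ≤ w_m`, which is the hypothesis `i ≥ (1 - w_m) n`.
-/

open Finset

/-- The paper's `f_m`. -/
def rootPoly (m : ℕ) (x : ℝ) : ℝ := x ^ (m + 1) - x ^ m - 2 * x + 1

lemma rootPoly_zero (x : ℝ) : rootPoly 0 x = -x := by
  simp only [rootPoly]
  ring

lemma rootPoly_half_neg (m : ℕ) : rootPoly m (1 / 2) < 0 := by
  have : (1 / 2 : ℝ) ^ (m + 1) < (1 / 2) ^ m :=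
    pow_lt_pow_right_of_lt_one₀ (by norm_num) (by norm_num) (Nat.lt_succ_self m)
  simp only [rootPoly]
  linarith

lemma nonneg_of_forall_root_ge {f : ℝ → ℝ} (hf : Continuous f) {a w t : ℝ} (ha : 0 < f a)
    (hw : ∀ x, a < x → f x = 0 → w ≤ x) (hat : a ≤ t) (htw : t ≤ w) : 0 ≤ f t := by
  by_contra! ht
  obtain ⟨c, ⟨hac, hct⟩, hc⟩ :=
    intermediate_value_Ioo' hat hf.continuousOn
      (show (0 : ℝ) ∈ Set.Ioo (f t) (f a) from ⟨ht, ha⟩)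
  linarith [hw c hac hc]

lemma rootPoly_nonneg_of_le {m : ℕ} {w t : ℝ} (hm : m ≠ 0)
    (hw : ∀ x, 0 < x → rootPoly m x = 0 → w ≤ x) (ht : 0 ≤ t) (htw : t ≤ w) :
    0 ≤ rootPoly m t :=
  nonneg_of_forall_root_ge (by unfold rootPoly; fun_prop) (by simp [rootPoly, hm]) hw ht htw

lemma lt_half_of_forall_rootPoly_root_ge {m : ℕ} {w : ℝ} (hm : m ≠ 0)
    (hw : ∀ x, 0 < x → rootPoly m x = 0 → w ≤ x) : w < 1 / 2 := by
  by_contra! hw_half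
  exact (rootPoly_half_neg m).not_ge (rootPoly_nonneg_of_le hm hw (by norm_num) hw_half)

namespace Nat

lemma choose_pred_mul_le_choose_mul {n k : ℕ} (i : ℕ) (hkn : k ≤ n) :
    (k - 1).choose i * n ≤ k.choose i * (n - i) := by
  obtain _ | j := k
  · cases i <;> simp
  have hsub : (j + 1 - i) * n ≤ (n - i) * (j + 1) := by
    rcases le_total i (j + 1) with h | h
    · zify [h, h.trans hkn]
      nlinarith
    · simp [Nat.sub_eq_zero_of_le h]
  refine Nat.le_of_mul_le_mul_right ?_ (succ_pos j)
  calc j.choose i * n * (j + 1) = (j + 1).choose i * ((j + 1 - i) * n) := by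
        rw [← mul_assoc, ← choose_mul_succ_eq]; ring
    _ ≤ (j + 1).choose i * ((n - i) * (j + 1)) := Nat.mul_le_mul_left _ hsub
    _ = (j + 1).choose i * (n - i) * (j + 1) := by ring

lemma choose_sub_mul_pow_le (n m i : ℕ) :
    (n - m).choose i * n ^ m ≤ n.choose i * (n - i) ^ m := by
  induction m with
  | zero => simp
  | succ m ih =>
    have hstep := choose_pred_mul_le_choose_mul i (sub_le n m)
    calc (n - (m + 1)).choose i * n ^ (m + 1) = (n - m - 1).choose i * n * n ^ m := by
          rw [Nat.sub_sub]; ring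
      _ ≤ (n - m).choose i * (n - i) * n ^ m := Nat.mul_le_mul_right _ hstep
      _ = (n - i) * ((n - m).choose i * n ^ m) := by ring
      _ ≤ (n - i) * (n.choose i * (n - i) ^ m) := Nat.mul_le_mul_left _ ih
      _ = n.choose i * (n - i) ^ (m + 1) := by ring

lemma choose_succ_add_choose_sub_le {n m i : ℕ} (hi : 0 < i) (hin : i ≤ n)
    (hf : 0 ≤ rootPoly m ((n - i) / n)) :
    n.choose (i + 1) + (n - m).choose i ≤ n.choose i := by
  have hn : (0 : ℝ) < n := by exact_mod_cast hi.trans_le hin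
  have h : ((n : ℝ) - i) ^ m * i ≤ n ^ m * (2 * i - n) := by
    have hexp : (n : ℝ) ^ (m + 1) * rootPoly m ((n - i) / n)
        = n ^ m * (2 * i - n) - ((n : ℝ) - i) ^ m * i := by
      rw [rootPoly, div_pow, div_pow]
      field_simp
      ring
    nlinarith [mul_nonneg (pow_pos hn (m + 1)).le hf]
  have hsucc : (i : ℝ) * n.choose (i + 1) ≤ (n - i) * n.choose i := by
    have := congrArg (Nat.cast : ℕ → ℝ) (choose_succ_right_eq n i)
    push_cast [hin] at this
    nlinarith [(n.choose (i + 1)).cast_nonneg (α := ℝ)]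
  have hsub : ((n - m).choose i : ℝ) * n ^ m ≤ n.choose i * ((n : ℝ) - i) ^ m := by
    exact_mod_cast choose_sub_mul_pow_le n m i
  have hpos : (0 : ℝ) < i * n ^ m := by positivity
  have hC : (0 : ℝ) ≤ n.choose i := by positivity
  suffices (i * n ^ m : ℝ) * (n.choose (i + 1) + (n - m).choose i) ≤ i * n ^ m * n.choose i by
    exact_mod_cast le_of_mul_le_mul_left this hpos
  calc (i * n ^ m : ℝ) * (n.choose (i + 1) + (n - m).choose i)
      = n ^ m * (i * n.choose (i + 1)) + i * ((n - m).choose i * n ^ m) := by ring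
    _ ≤ n ^ m * ((n - i) * n.choose i) + i * (n.choose i * ((n : ℝ) - i) ^ m) := by
        gcongr
    _ = n ^ m * (n - i) * n.choose i + n.choose i * (((n : ℝ) - i) ^ m * i) := by ring
    _ ≤ n ^ m * (n - i) * n.choose i + n.choose i * (n ^ m * (2 * i - n)) := by gcongr
    _ = i * n ^ m * n.choose i := by ring

end Nat

namespace SimpleGraph

variable {V : Type*} [Fintype V] (G : SimpleGraph V)

def universalFinset [DecidableEq V] [DecidableRel G.Adj] : Finset V :=
  {v | ∀ u, u ≠ v → G.Adj v u}

lemma card_universalFinset [DecidableEq V] [DecidableRel G.Adj] :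
    #G.universalFinset = universalCount G := by
  rw [universalCount, Nat.card_eq_fintype_card, Fintype.card_subtype, universalFinset]

lemma dominates_of_mem_universalFinset [DecidableEq V] [DecidableRel G.Adj] {U : Finset V}
    {v : V} (hvU : v ∈ U) (hv : v ∈ G.universalFinset) : Dominates G U := by
  intro u
  by_cases huv : u = v
  · exact .inl (huv ▸ hvU)
  · exact .inr ⟨v, hvU, (mem_filter.1 hv).2 u huv⟩

lemma domCount_eq_card_filter [DecidablePred (Dominates G)] (i : ℕ) :
    domCount G i = #{U ∈ powersetCard i univ | Dominates G U} := by
  rw [domCount, Nat.card_eq_fintype_card, Fintype.card_subtype]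
  congr 1
  ext U
  simp

lemma domCount_le_choose (i : ℕ) : domCount G i ≤ (Fintype.card V).choose i := by
  classical
  rw [domCount_eq_card_filter]
  exact (card_filter_le _ _).trans_eq (by rw [card_powersetCard, card_univ])

lemma choose_sub_choose_le_domCount (i : ℕ) :
    (Fintype.card V).choose i - (Fintype.card V - universalCount G).choose i ≤ domCount G i := by
  classical
  have hnondom : {U ∈ powersetCard i (univ : Finset V) | ¬Dominates G U} ⊆
      powersetCard i G.universalFinsetᶜ := by
    intro U hU
    obtain ⟨hUi, hU⟩ := mem_filter.1 hU
    refine mem_powersetCard.2 ⟨fun v hvU => mem_compl.2 fun hv => ?_,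
      (mem_powersetCard.1 hUi).2⟩
    exact hU (G.dominates_of_mem_universalFinset hvU hv)
  have hsplit := card_filter_add_card_filter_not (s := powersetCard i (univ : Finset V))
    (fun U => Dominates G U)
  have hle := card_le_card hnondom
  rw [card_powersetCard, card_univ] at hsplit
  rw [card_powersetCard, card_compl, card_universalFinset] at hle
  rw [domCount_eq_card_filter]
  omega

end SimpleGraph

theorem domCount_decreasing_of_universal {V : Type*} [Fintype V] (G : SimpleGraph V) (m : ℕ)
    (hm : m = universalCount G) (w : ℝ) (hw_pos : 0 < w)
    (hw_root : w ^ (m + 1) - w ^ m - 2 * w + 1 = 0)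
    (hw_min : ∀ x : ℝ, 0 < x → x ^ (m + 1) - x ^ m - 2 * x + 1 = 0 → w ≤ x)
    (i : ℕ) (hi : (1 - w) * (Fintype.card V : ℝ) ≤ (i : ℝ)) :
    domCount G (i + 1) ≤ domCount G i := by
  have hm0 : m ≠ 0 := by
    rintro rfl
    linarith [(rootPoly_zero w).symm.trans hw_root]
  have hw_half := lt_half_of_forall_rootPoly_root_ge hm0 hw_min
  have hlow := G.choose_sub_choose_le_domCount i
  have hup := G.domCount_le_choose (i + 1)
  rw [← hm] at hlow
  set n := Fintype.card V
  rcases le_or_gt n i with hni | hin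
  · rw [Nat.choose_eq_zero_of_lt (by omega)] at hup
    omega
  have hn : (0 : ℝ) < n := by exact_mod_cast (Nat.zero_le i).trans_lt hin
  have hi0 : 0 < i := Nat.pos_of_ne_zero <| by
    rintro rfl
    push_cast at hi
    nlinarith
  have hf := rootPoly_nonneg_of_le hm0 hw_min (t := (n - i) / n)
    (div_nonneg (by simpa using hin.le) hn.le) (by rw [div_le_iff₀ hn]; linarith)
  have key := Nat.choose_succ_add_choose_sub_le hi0 hin.le hf
  omega
end

section
/- For every positive integer m, the polynomial f_m(x) = x^{m+1} − x^m − 2x + 1 has a real root in the open interval (1/2 − 1/2^{m+1}, 1/2), and this is its smallest positive real root. -/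
/-!
Write `f_m x = x ^ m * (x - 1) + (1 - 2 * x)`. Left of `a = 1/2 - 1/2^(m+1)` the linear part
`1 - 2x` is at least `1/2^m`, which beats `x ^ m`, so `f_m` has no zero in `[0, a]`; at `1/2`
it equals `-(1/2)^(m+1) < 0`. The least zero of `f_m` on `[a, 1/2]`, which exists by the
intermediate value theorem and compactness, is therefore the smallest positive root.
-/

theorem exists_least_zero_of_pos_of_neg {g : ℝ → ℝ} {a b : ℝ} (hab : a ≤ b)
    (hg : ContinuousOn g (Set.Icc a b)) (ha : 0 < g a) (hb : g b < 0) :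
    ∃ w ∈ Set.Ioo a b, g w = 0 ∧ ∀ x ∈ Set.Icc a b, g x = 0 → w ≤ x := by
  have hclosed : IsClosed (Set.Icc a b ∩ g ⁻¹' {0}) :=
    hg.preimage_isClosed_of_isClosed isClosed_Icc isClosed_singleton
  have hne : (Set.Icc a b ∩ g ⁻¹' {0}).Nonempty :=
    intermediate_value_Icc' hab hg ⟨hb.le, ha.le⟩
  obtain ⟨w, ⟨⟨haw, hwb⟩, hw0⟩, hwmin⟩ :=
    (isCompact_Icc.of_isClosed_subset hclosed Set.inter_subset_left).exists_isLeast hne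
  refine ⟨w, ⟨haw.lt_of_ne ?_, hwb.lt_of_ne ?_⟩, hw0, fun x hx hx0 => hwmin ⟨hx, hx0⟩⟩
  · rintro rfl; exact ha.ne' hw0
  · rintro rfl; exact hb.ne hw0

namespace RootLocation

def f (m : ℕ) (x : ℝ) : ℝ := x ^ (m + 1) - x ^ m - 2 * x + 1

theorem half_sub_lt_half (m : ℕ) : (1 / 2 - 1 / 2 ^ (m + 1) : ℝ) < 1 / 2 := by
  linarith [show (0 : ℝ) < 1 / 2 ^ (m + 1) by positivity]

theorem half_sub_nonneg (m : ℕ) : (0 : ℝ) ≤ 1 / 2 - 1 / 2 ^ (m + 1) := by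
  have : (1 : ℝ) / 2 ^ (m + 1) ≤ 1 / 2 ^ 1 :=
    one_div_le_one_div_of_le (by norm_num) (pow_le_pow_right₀ one_le_two m.succ_pos)
  linarith

theorem continuous_f (m : ℕ) : Continuous (f m) := by
  unfold f; fun_prop

theorem f_half_neg (m : ℕ) : f m (1 / 2) < 0 := by
  have : (0 : ℝ) < (1 / 2) ^ m := by positivity
  rw [f, pow_succ]
  linarith

theorem f_pos_of_le {m : ℕ} (hm : m ≠ 0) {x : ℝ} (hx : 0 ≤ x)
    (hxa : x ≤ 1 / 2 - 1 / 2 ^ (m + 1)) : 0 < f m x := by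
  have hpow : x ^ m < 1 / 2 ^ m := by
    simpa [div_pow] using pow_lt_pow_left₀ (hxa.trans_lt (half_sub_lt_half m)) hx hm
  have hlin : 1 / 2 ^ m ≤ 1 - 2 * x := by
    have : (1 : ℝ) / 2 ^ (m + 1) = 1 / 2 ^ m / 2 := by rw [pow_succ, div_div]
    linarith
  have : 0 ≤ x ^ (m + 1) := by positivity
  unfold f
  linarith

end RootLocation

open RootLocation in
theorem root_location (m : ℕ) (hm : 1 ≤ m) :
    ∃ w : ℝ, w ∈ Set.Ioo (1 / 2 - 1 / 2 ^ (m + 1) : ℝ) (1 / 2 : ℝ) ∧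
      w ^ (m + 1) - w ^ m - 2 * w + 1 = 0 ∧
      ∀ x : ℝ, 0 < x → x ^ (m + 1) - x ^ m - 2 * x + 1 = 0 → w ≤ x := by
  have hm0 : m ≠ 0 := by omega
  obtain ⟨w, hw, hw0, hwmin⟩ := exists_least_zero_of_pos_of_neg (half_sub_lt_half m).le
    (continuous_f m).continuousOn (f_pos_of_le hm0 (half_sub_nonneg m) le_rfl) (f_half_neg m)
  refine ⟨w, hw, hw0, fun x hx hx0 => ?_⟩
  rcases le_or_gt x (1 / 2 - 1 / 2 ^ (m + 1)) with hxa | hxa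
  · exact absurd hx0 (f_pos_of_le hm0 hx.le hxa).ne'
  rcases le_or_gt x (1 / 2) with hxb | hxb
  · exact hwmin x ⟨hxa.le, hxb⟩ hx0
  · linarith [hw.2]
end

section
/- If G is a graph on n vertices having at least log₂(n) − 1 universal vertices, then the domination polynomial of G is unimodal with a mode at ⌈n/2⌉ or ⌈n/2⌉+1. -/
/-- The coefficient sequence is non-decreasing up to `k` and non-increasing afterwards,
so in particular `k` is a mode. -/
def UnimodalWithMode (d : ℕ → ℕ) (k : ℕ) : Prop :=
  (∀ i < k, d i ≤ d (i + 1)) ∧ (∀ i, k ≤ i → d (i + 1) ≤ d i)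

/-!
Dominating sets form an up-closed family, so double counting the pairs `U ⊂ W` of an `i`-set and
an `(i + 1)`-set (the local LYM inequality) gives `d_i (n - i) ≤ d_{i+1} (i + 1)`, and the
coefficients increase while `2 i < n`. Conversely, an `i`-set that fails to dominate avoids all `m`
universal vertices, so `d_i ≥ C(n, i) - C(n - m, i)`, while `d_{i+1} ≤ C(n, i + 1)`. Once `n ≤ 2 i`,
every vertex removed from the ground set at least halves the number of `i`-sets, so
`C(n - m, i) ≤ 2⁻ᵐ C(n, i)`; with `n ≤ 2 ^ (m + 1)` this is at most `C(n, i) - C(n, i + 1)` as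
soon as `n < 2 i`. Increase for `i < ⌈n/2⌉` and decrease for `i > ⌈n/2⌉` leave the mode at `⌈n/2⌉`
or `⌈n/2⌉ + 1`.
-/

open Finset
open scoped FinsetFamily

namespace Nat

theorem two_mul_choose_le_choose_succ {p i : ℕ} (h : p + 1 ≤ 2 * i) :
    2 * p.choose i ≤ (p + 1).choose i := by
  refine Nat.le_of_mul_le_mul_right (c := p + 1) ?_ p.succ_pos
  calc 2 * p.choose i * (p + 1) = (p + 1).choose i * (2 * (p + 1 - i)) := by
        rw [mul_assoc, choose_mul_succ_eq]; ring
    _ ≤ (p + 1).choose i * (p + 1) := Nat.mul_le_mul_left _ (by omega)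

theorem two_pow_mul_choose_sub_le_choose {n m i : ℕ} (hm : m ≤ n) (hi : n ≤ 2 * i) :
    2 ^ m * (n - m).choose i ≤ n.choose i := by
  induction m generalizing n with
  | zero => simp
  | succ m ih =>
    obtain ⟨p, rfl⟩ : ∃ p, n = p + 1 := ⟨n - 1, by omega⟩
    calc 2 ^ (m + 1) * (p + 1 - (m + 1)).choose i = 2 * (2 ^ m * (p - m).choose i) := by
          rw [Nat.add_sub_add_right, pow_succ]; ring
      _ ≤ 2 * p.choose i := Nat.mul_le_mul_left _ (ih (by omega) (by omega))
      _ ≤ (p + 1).choose i := two_mul_choose_le_choose_succ hi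

theorem choose_succ_add_choose_sub_le_choose {n m i : ℕ} (hm : m ≤ n) (hn : n ≤ 2 ^ (m + 1))
    (hi : n + 1 ≤ 2 * i) : n.choose (i + 1) + (n - m).choose i ≤ n.choose i := by
  have hcoef : (n - i) * 2 ^ m + (i + 1) ≤ (i + 1) * 2 ^ m := by
    rcases le_or_gt n i with hin | hin
    · rw [Nat.sub_eq_zero_of_le hin, zero_mul, zero_add]
      exact Nat.le_mul_of_pos_right _ (by positivity)
    · rw [pow_succ] at hn
      calc (n - i) * 2 ^ m + (i + 1) ≤ (n - i + 2) * 2 ^ m := by rw [add_mul]; omega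
        _ ≤ (i + 1) * 2 ^ m := Nat.mul_le_mul_right _ (by omega)
  refine Nat.le_of_mul_le_mul_right (c := (i + 1) * 2 ^ m) ?_ (by positivity)
  calc (n.choose (i + 1) + (n - m).choose i) * ((i + 1) * 2 ^ m)
      = n.choose i * ((n - i) * 2 ^ m) + 2 ^ m * (n - m).choose i * (i + 1) := by
        rw [add_mul, ← mul_assoc, choose_succ_right_eq]; ring
    _ ≤ n.choose i * ((n - i) * 2 ^ m) + n.choose i * (i + 1) := by
        gcongr; exact two_pow_mul_choose_sub_le_choose hm (by omega)
    _ = n.choose i * ((n - i) * 2 ^ m + (i + 1)) := by ring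
    _ ≤ n.choose i * ((i + 1) * 2 ^ m) := Nat.mul_le_mul_left _ hcoef

theorem le_two_pow_succ_of_logb_sub_one_le {n m : ℕ} (h : Real.logb 2 n - 1 ≤ m) :
    n ≤ 2 ^ (m + 1) := by
  rcases n.eq_zero_or_pos with rfl | hn
  · exact Nat.zero_le _
  have hle : (n : ℝ) ≤ 2 ^ ((m + 1 : ℕ) : ℝ) :=
    (Real.logb_le_iff_le_rpow one_lt_two (by exact_mod_cast hn)).1 (by push_cast; linarith)
  rw [Real.rpow_natCast] at hle
  exact_mod_cast hle

end Nat

namespace Finset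

variable {α : Type*} [DecidableEq α] [Fintype α] {𝒜 : Finset (Finset α)}

theorem card_mul_le_card_upShadow_mul {r : ℕ} (h𝒜 : (𝒜 : Set (Finset α)).Sized r) :
    #𝒜 * (Fintype.card α - r) ≤ #(∂⁺ 𝒜) * (r + 1) := by
  rcases le_or_gt r (Fintype.card α) with hr | hr
  · simpa [Nat.sub_sub_self hr] using card_mul_le_card_shadow_mul h𝒜.compls
  · simp [Nat.sub_eq_zero_of_le hr.le]

theorem _root_.IsUpperSet.card_slice_mul_le (h𝒜 : IsUpperSet (𝒜 : Set (Finset α))) (r : ℕ) :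
    #(𝒜 # r) * (Fintype.card α - r) ≤ #(𝒜 # (r + 1)) * (r + 1) := by
  refine (card_mul_le_card_upShadow_mul sized_slice).trans
    (Nat.mul_le_mul_right _ (card_le_card fun t ht => ?_))
  obtain ⟨s, hs, a, ha, rfl⟩ := mem_upShadow_iff.1 ht
  rw [mem_slice] at hs ⊢
  exact ⟨h𝒜 (subset_insert a s) hs.1, by rw [card_insert_of_notMem ha, hs.2]⟩

theorem _root_.IsUpperSet.card_slice_le_card_slice_succ (h𝒜 : IsUpperSet (𝒜 : Set (Finset α)))
    {r : ℕ} (hr : 2 * r + 1 ≤ Fintype.card α) : #(𝒜 # r) ≤ #(𝒜 # (r + 1)) :=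
  Nat.le_of_mul_le_mul_right
    ((h𝒜.card_slice_mul_le r).trans (Nat.mul_le_mul_left _ (by omega))) (by omega)

end Finset

theorem unimodalWithMode_or_unimodalWithMode_succ {d : ℕ → ℕ} {k : ℕ} (hinc : ∀ i < k, d i ≤ d (i + 1))
    (hdec : ∀ i, k + 1 ≤ i → d (i + 1) ≤ d i) :
    UnimodalWithMode d k ∨ UnimodalWithMode d (k + 1) := by
  rcases le_total (d (k + 1)) (d k) with hk | hk
  · refine .inl ⟨hinc, fun i hi => ?_⟩
    rcases hi.eq_or_lt with rfl | hi
    · exact hk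
    · exact hdec i hi
  · refine .inr ⟨fun i hi => ?_, hdec⟩
    rcases (Nat.lt_succ_iff.1 hi).eq_or_lt with rfl | hi
    · exact hk
    · exact hinc i hi

section Domination

variable {V : Type*} (G : SimpleGraph V)

theorem isUpperSet_dominates : IsUpperSet {U : Finset V | Dominates G U} :=
  fun _ _ hUW hU v => (hU v).imp (@hUW v) fun ⟨u, hu, huv⟩ => ⟨u, hUW hu, huv⟩

theorem dominates_of_universal_mem {U : Finset V} {v : V} (hv : v ∈ U) (huniv : ∀ u, u ≠ v → G.Adj v u) :
    Dominates G U := fun u => by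
  by_cases h : u = v
  · exact .inl (h ▸ hv)
  · exact .inr ⟨v, hv, huniv u h⟩

variable [Fintype V]

open Classical in
theorem domCount_eq_card_slice (i : ℕ) : domCount G i = #({U | Dominates G U} # i) := by
  rw [domCount, Nat.card_eq_fintype_card, Fintype.card_subtype]
  congr 1
  ext U
  simp [mem_slice, and_comm]

theorem domCount_le_choose (i : ℕ) : domCount G i ≤ (Fintype.card V).choose i := by
  classical
  rw [domCount_eq_card_slice]
  exact sized_slice.card_le

theorem universalCount_le_card : universalCount G ≤ Fintype.card V :=
  Nat.card_eq_fintype_card (α := V) ▸ Finite.card_subtype_le _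

theorem choose_le_domCount_add_choose (i : ℕ) :
    (Fintype.card V).choose i ≤ domCount G i + (Fintype.card V - universalCount G).choose i := by
  classical
  set A : Finset V := {v | ∀ u, u ≠ v → G.Adj v u}
  have hA : #A = universalCount G := by
    rw [universalCount, Nat.card_eq_fintype_card, Fintype.card_subtype]
  have hcover : powersetCard i univ ⊆ {U | Dominates G U} # i ∪ powersetCard i Aᶜ := by
    intro U hU
    rw [mem_powersetCard] at hU
    rw [mem_union, mem_slice, mem_powersetCard, subset_compl_iff_disjoint_right]
    by_cases hdisj : Disjoint U A
    · exact .inr ⟨hdisj, hU.2⟩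
    · obtain ⟨v, hvU, hvA⟩ := not_disjoint_iff.1 hdisj
      exact .inl ⟨by simpa using dominates_of_universal_mem G hvU (by simpa [A] using hvA), hU.2⟩
  calc (Fintype.card V).choose i = #(powersetCard i (univ : Finset V)) := by simp
    _ ≤ _ := (card_le_card hcover).trans (card_union_le _ _)
    _ = _ := by rw [domCount_eq_card_slice, card_powersetCard, card_compl, hA]

theorem domCount_le_domCount_succ {i : ℕ} (hi : 2 * i + 1 ≤ Fintype.card V) :
    domCount G i ≤ domCount G (i + 1) := by
  classical
  simpa only [domCount_eq_card_slice] using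
    IsUpperSet.card_slice_le_card_slice_succ (by simpa using isUpperSet_dominates G) hi

theorem domCount_succ_le_domCount (hn : Fintype.card V ≤ 2 ^ (universalCount G + 1)) {i : ℕ}
    (hi : Fintype.card V + 1 ≤ 2 * i) : domCount G (i + 1) ≤ domCount G i := by
  have hchoose := Nat.choose_succ_add_choose_sub_le_choose (universalCount_le_card G) hn hi
  have hupper := domCount_le_choose G (i + 1)
  have hlower := choose_le_domCount_add_choose G i
  omega

end Domination

theorem unimodal_of_many_universal {V : Type*} [Fintype V] (G : SimpleGraph V)
    (h : Real.logb 2 (Fintype.card V) - 1 ≤ (universalCount G : ℝ)) :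
    UnimodalWithMode (domCount G) ((Fintype.card V + 1) / 2) ∨
      UnimodalWithMode (domCount G) ((Fintype.card V + 1) / 2 + 1) := by
  have hn := Nat.le_two_pow_succ_of_logb_sub_one_le h
  exact unimodalWithMode_or_unimodalWithMode_succ
    (fun i hi => domCount_le_domCount_succ G (by omega))
    (fun i hi => domCount_succ_le_domCount G hn (by omega))
end
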